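/- arXiv:2005.06304 — 3 statements merged into one kernel-verified Lean document; each statement's English description precedes it below -/
import Mathlib

section
/- Let (L,R) be a Galois correspondence between concrete categories D and E over a base category B. Then a concrete category X over B is concretely equivalent to Fix(RL) if and only if there exist essentially surjective concrete functors F : D → X and G : E → X such that E(LA,B') = X(FA,GB') (as subsets of B(|A|,|B'|)) for all objects A of D and B' of E. -/
universe u

/-- A quantaloid: a category whose hom-sets are complete lattices and whose
composition preserves arbitrary joins in each variable. -/
structure Quantaloid : Type (u + 1) where
  Obj : Type u
  Hom : Obj → Obj → Type u
  [lat : ∀ S T : Obj, CompleteLattice (Hom S T)]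
  comp : ∀ {S T U : Obj}, Hom T U → Hom S T → Hom S U
  one : ∀ S : Obj, Hom S S
  comp_assoc : ∀ {S T U V : Obj} (w : Hom U V) (v : Hom T U) (u : Hom S T),
      comp (comp w v) u = comp w (comp v u)
  comp_one : ∀ {S T : Obj} (u : Hom S T), comp u (one S) = u
  one_comp : ∀ {S T : Obj} (u : Hom S T), comp (one T) u = u
  comp_sSup : ∀ {S T U : Obj} (v : Hom T U) (s : Set (Hom S T)),
      comp v (sSup s) = ⨆ u ∈ s, comp v u
  sSup_comp : ∀ {S T U : Obj} (s : Set (Hom T U)) (u : Hom S T),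
      comp (sSup s) u = ⨆ v ∈ s, comp v u

attribute [instance] Quantaloid.lat

namespace Quantaloid

variable (Q : Quantaloid.{u})

/-- The left implication `w ↙ u`, characterized by `v ∘ u ≤ w ↔ v ≤ w ↙ u`. -/
def lda {S T U : Q.Obj} (w : Q.Hom S U) (u : Q.Hom S T) : Q.Hom T U :=
  sSup {v | Q.comp v u ≤ w}

/-- The right implication `v ↘ w`, characterized by `v ∘ u ≤ w ↔ u ≤ v ↘ w`. -/
def rda {S T U : Q.Obj} (v : Q.Hom T U) (w : Q.Hom S U) : Q.Hom S T :=
  sSup {u | Q.comp v u ≤ w}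

/-- Transport of a `Q`-arrow along equalities of objects. -/
def cast {S S' T T' : Q.Obj} (hS : S = S') (hT : T = T') (u : Q.Hom S T) : Q.Hom S' T' :=
  hS ▸ hT ▸ u

variable {Q}

theorem comp_mono_left {S T U : Q.Obj} {v v' : Q.Hom T U} (h : v ≤ v') (u : Q.Hom S T) :
    Q.comp v u ≤ Q.comp v' u := by
  have h1 : sSup ({v, v'} : Set (Q.Hom T U)) = v' := by
    rw [sSup_pair]; exact sup_eq_right.mpr h
  calc Q.comp v u ≤ ⨆ x ∈ ({v, v'} : Set (Q.Hom T U)), Q.comp x u :=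
        le_iSup₂ (f := fun x _ => Q.comp x u) v (by simp)
    _ = Q.comp (sSup ({v, v'} : Set (Q.Hom T U))) u := (Q.sSup_comp _ _).symm
    _ = Q.comp v' u := by rw [h1]

theorem comp_mono_right {S T U : Q.Obj} (v : Q.Hom T U) {u u' : Q.Hom S T} (h : u ≤ u') :
    Q.comp v u ≤ Q.comp v u' := by
  have h1 : sSup ({u, u'} : Set (Q.Hom S T)) = u' := by
    rw [sSup_pair]; exact sup_eq_right.mpr h
  calc Q.comp v u ≤ ⨆ x ∈ ({u, u'} : Set (Q.Hom S T)), Q.comp v x :=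
        le_iSup₂ (f := fun x _ => Q.comp v x) u (by simp)
    _ = Q.comp v (sSup ({u, u'} : Set (Q.Hom S T))) := (Q.comp_sSup _ _).symm
    _ = Q.comp v u' := by rw [h1]

theorem comp_lda_le {S T U : Q.Obj} (w : Q.Hom S U) (u : Q.Hom S T) :
    Q.comp (Q.lda w u) u ≤ w := by
  rw [lda, Q.sSup_comp]
  exact iSup₂_le fun v hv => hv

theorem comp_rda_le {S T U : Q.Obj} (v : Q.Hom T U) (w : Q.Hom S U) :
    Q.comp v (Q.rda v w) ≤ w := by
  rw [rda, Q.comp_sSup]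
  exact iSup₂_le fun u hu => hu

theorem le_lda {S T U : Q.Obj} {u : Q.Hom S T} {v : Q.Hom T U} {w : Q.Hom S U} :
    Q.comp v u ≤ w ↔ v ≤ Q.lda w u :=
  ⟨fun h => le_sSup h, fun h => le_trans (comp_mono_left h u) (comp_lda_le w u)⟩

theorem le_rda {S T U : Q.Obj} {u : Q.Hom S T} {v : Q.Hom T U} {w : Q.Hom S U} :
    Q.comp v u ≤ w ↔ u ≤ Q.rda v w :=
  ⟨fun h => le_sSup h, fun h => le_trans (comp_mono_right v h) (comp_rda_le v w)⟩

theorem cast_cast {S S' S'' T T' T'' : Q.Obj} (h1 : S = S') (h2 : T = T')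
    (h3 : S' = S'') (h4 : T' = T'') (u : Q.Hom S T) :
    Q.cast h3 h4 (Q.cast h1 h2 u) = Q.cast (h1.trans h3) (h2.trans h4) u := by
  subst h1; subst h2; subst h3; subst h4; rfl

theorem cast_mono {S S' T T' : Q.Obj} (hS : S = S') (hT : T = T') {u v : Q.Hom S T}
    (h : u ≤ v) : Q.cast hS hT u ≤ Q.cast hS hT v := by
  subst hS; subst hT; exact h

end Quantaloid
/-! ## Quantaloid-enriched categories -/

/-- A `Q`-category: a class of objects with extents and hom-arrows in `Q`. -/
structure QCat (Q : Quantaloid.{u}) : Type (u + 1) where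
  Obj : Type u
  ext : Obj → Q.Obj
  hom : ∀ X Y : Obj, Q.Hom (ext X) (ext Y)
  one_le : ∀ X, Q.one (ext X) ≤ hom X X
  comp_le : ∀ X Y Z, Q.comp (hom Y Z) (hom X Y) ≤ hom X Z

/-- A `Q`-relation between (the object classes of) two `Q`-categories. -/
abbrev QRel (Q : Quantaloid.{u}) (D E : QCat Q) : Type u :=
  ∀ (X : D.Obj) (Y : E.Obj), Q.Hom (D.ext X) (E.ext Y)

/-- The hom `Q`-relation of a `Q`-category. -/
def QCat.homRel {Q : Quantaloid.{u}} (E : QCat Q) : QRel Q E E := fun X Y => E.hom X Y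

/-- Composition of `Q`-relations. -/
def QRel.comp {Q : Quantaloid.{u}} {C D E : QCat Q} (Ψ : QRel Q D E) (Φ : QRel Q C D) :
    QRel Q C E :=
  fun X Z => ⨆ Y : D.Obj, Q.comp (Ψ Y Z) (Φ X Y)

/-- Left implication of `Q`-relations: `(Ξ ↙ Φ)(Y,Z) = ⋀_X Ξ(X,Z) ↙ Φ(X,Y)`. -/
def QRel.lda {Q : Quantaloid.{u}} {C D E : QCat Q} (Ξ : QRel Q C E) (Φ : QRel Q C D) :
    QRel Q D E :=
  fun Y Z => ⨅ X : C.Obj, Q.lda (Ξ X Z) (Φ X Y)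

/-- Right implication of `Q`-relations: `(Ψ ↘ Ξ)(X,Y) = ⋀_Z Ψ(Y,Z) ↘ Ξ(X,Z)`. -/
def QRel.rda {Q : Quantaloid.{u}} {C D E : QCat Q} (Ψ : QRel Q D E) (Ξ : QRel Q C E) :
    QRel Q C D :=
  fun X Y => ⨅ Z : E.Obj, Q.rda (Ψ Y Z) (Ξ X Z)

/-- A `Q`-relation between `Q`-categories is a `Q`-distributor if `E ∘ Φ ∘ D ≤ Φ`. -/
def IsDist {Q : Quantaloid.{u}} {D E : QCat Q} (Φ : QRel Q D E) : Prop :=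
  QRel.comp E.homRel (QRel.comp Φ D.homRel) ≤ Φ

/-- The one-object `Q`-category on an object `T` of `Q`, with hom `1_T`. -/
def singleQCat (Q : Quantaloid.{u}) (T : Q.Obj) : QCat Q where
  Obj := PUnit
  ext _ := T
  hom _ _ := Q.one T
  one_le _ := le_rfl
  comp_le _ _ _ := le_of_eq (Q.comp_one _)

/-- A sink of extent `T` on a `Q`-category `E`: a `Q`-relation `E₀ ⇸ {T}`. -/
abbrev Sink {Q : Quantaloid.{u}} (E : QCat Q) (T : Q.Obj) : Type u :=
  QRel Q E (singleQCat Q T)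

/-- A source of extent `T` on a `Q`-category `E`: a `Q`-relation `{T} ⇸ E₀`. -/
abbrev Source {Q : Quantaloid.{u}} (E : QCat Q) (T : Q.Obj) : Type u :=
  QRel Q (singleQCat Q T) E

/-- `Y` is the supremum of the sink `σ`: `Y` has extent `T` and `E(Y,−) = E ↙ σ`. -/
structure IsSup {Q : Quantaloid.{u}} (E : QCat Q) {T : Q.Obj} (σ : Sink E T) (Y : E.Obj) :
    Prop where
  ext : E.ext Y = T
  hom : ∀ Z : E.Obj, Q.cast ext rfl (E.hom Y Z) = QRel.lda E.homRel σ PUnit.unit Z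

/-- `Y` is the infimum of the source `τ`: `Y` has extent `T` and `E(−,Y) = τ ↘ E`. -/
structure IsInf {Q : Quantaloid.{u}} (E : QCat Q) {T : Q.Obj} (τ : Source E T) (Y : E.Obj) :
    Prop where
  ext : E.ext Y = T
  hom : ∀ Z : E.Obj, Q.cast rfl ext (E.hom Z Y) = QRel.rda τ E.homRel Z PUnit.unit

/-- A `Q`-category is total if every sink on it has a supremum. -/
def QCat.Total {Q : Quantaloid.{u}} (E : QCat Q) : Prop :=
  ∀ (T : Q.Obj) (σ : Sink E T), ∃ Y : E.Obj, IsSup E σ Y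

/-- A `Q`-functor between `Q`-categories. -/
structure QFun {Q : Quantaloid.{u}} (D E : QCat Q) : Type u where
  obj : D.Obj → E.Obj
  ext : ∀ X, E.ext (obj X) = D.ext X
  hom_le : ∀ X Y, D.hom X Y ≤ Q.cast (ext X) (ext Y) (E.hom (obj X) (obj Y))

/-- The graph `F_♮(X,Y) = E(FX,Y)` of a `Q`-functor. -/
def QFun.graph {Q : Quantaloid.{u}} {D E : QCat Q} (F : QFun D E) : QRel Q D E :=
  fun X Y => Q.cast (F.ext X) rfl (E.hom (F.obj X) Y)

/-- The cograph `F^♮(Y,X) = E(Y,FX)` of a `Q`-functor. -/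
def QFun.cograph {Q : Quantaloid.{u}} {D E : QCat Q} (F : QFun D E) : QRel Q E D :=
  fun Y X => Q.cast rfl (F.ext X) (E.hom Y (F.obj X))

/-- `Y` is the colimit of `F` weighted by the sink `σ`: `E(Y,−) = F_♮ ↙ σ`. -/
structure IsColim {Q : Quantaloid.{u}} {D E : QCat Q} (F : QFun D E) {T : Q.Obj}
    (σ : Sink D T) (Y : E.Obj) : Prop where
  ext : E.ext Y = T
  hom : ∀ Z : E.Obj, Q.cast ext rfl (E.hom Y Z) = QRel.lda F.graph σ PUnit.unit Z

/-- `Y` is the limit of `F` weighted by the source `τ`: `E(−,Y) = τ ↘ F^♮`. -/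
structure IsLim {Q : Quantaloid.{u}} {D E : QCat Q} (F : QFun D E) {T : Q.Obj}
    (τ : Source D T) (Y : E.Obj) : Prop where
  ext : E.ext Y = T
  hom : ∀ Z : E.Obj, Q.cast rfl ext (E.hom Z Y) = QRel.rda τ F.cograph Z PUnit.unit

/-- A `Q`-functor is dense if every object of its codomain is a weighted colimit of it. -/
def QFun.Dense {Q : Quantaloid.{u}} {D E : QCat Q} (F : QFun D E) : Prop :=
  ∀ Y : E.Obj, ∃ (T : Q.Obj) (σ : Sink D T), IsColim F σ Y

/-- A `Q`-functor is codense if every object of its codomain is a weighted limit of it. -/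
def QFun.Codense {Q : Quantaloid.{u}} {D E : QCat Q} (F : QFun D E) : Prop :=
  ∀ Y : E.Obj, ∃ (T : Q.Obj) (τ : Source D T), IsLim F τ Y

/-- The underlying (pre)order of a `Q`-category: `X ≤ Y` iff `|X| = |Y|` and
`1_{|X|} ≤ E(X,Y)`. -/
def QCat.le {Q : Quantaloid.{u}} (E : QCat Q) (X Y : E.Obj) : Prop :=
  ∃ h : E.ext X = E.ext Y, Q.cast rfl h (Q.one (E.ext X)) ≤ E.hom X Y

/-- `X ≅ Y` in the underlying order of a `Q`-category. -/
def QCat.iso {Q : Quantaloid.{u}} (E : QCat Q) (X Y : E.Obj) : Prop :=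
  E.le X Y ∧ E.le Y X

/-- A `Q`-category is separated if isomorphic objects are equal. -/
def QCat.Separated {Q : Quantaloid.{u}} (E : QCat Q) : Prop :=
  ∀ X Y : E.Obj, E.iso X Y → X = Y

/-- The identity `Q`-functor. -/
def QFun.id {Q : Quantaloid.{u}} (E : QCat Q) : QFun E E where
  obj X := X
  ext _ := rfl
  hom_le _ _ := le_rfl

/-- Composition of `Q`-functors. -/
def QFun.comp {Q : Quantaloid.{u}} {C D E : QCat Q} (G : QFun D E) (F : QFun C D) :
    QFun C E where
  obj X := G.obj (F.obj X)
  ext X := (G.ext (F.obj X)).trans (F.ext X)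
  hom_le X Y := by
    refine le_trans (F.hom_le X Y) ?_
    refine le_trans (Quantaloid.cast_mono (F.ext X) (F.ext Y)
      (G.hom_le (F.obj X) (F.obj Y))) ?_
    rw [Quantaloid.cast_cast]

/-- The full `Q`-subcategory of `E` on the objects satisfying `P`. -/
def QCat.full {Q : Quantaloid.{u}} (E : QCat Q) (P : E.Obj → Prop) : QCat Q where
  Obj := {X : E.Obj // P X}
  ext X := E.ext X.1
  hom X Y := E.hom X.1 Y.1
  one_le X := E.one_le X.1
  comp_le X Y Z := E.comp_le X.1 Y.1 Z.1

/-- The inclusion `Q`-functor of a full `Q`-subcategory. -/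
def QCat.incl {Q : Quantaloid.{u}} (E : QCat Q) (P : E.Obj → Prop) :
    QFun (E.full P) E where
  obj X := X.1
  ext _ := rfl
  hom_le _ _ := le_rfl

/-- The full `Q`-subcategory of fixed points of an endo-`Q`-functor. -/
def QCat.fix {Q : Quantaloid.{u}} (E : QCat Q) (F : QFun E E) : QCat Q :=
  E.full (fun X => E.iso (F.obj X) X)

/-- Adjoint `Q`-functors: `L ⊣ R` iff `E(LX,Y) = D(X,RY)`. -/
def QAdj {Q : Quantaloid.{u}} {D E : QCat Q} (L : QFun D E) (R : QFun E D) : Prop :=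
  ∀ (X : D.Obj) (Y : E.Obj), L.graph X Y = Q.cast rfl (R.ext Y) (D.hom X (R.obj Y))

/-- An essentially surjective `Q`-functor. -/
def QFun.EssSurj {Q : Quantaloid.{u}} {D E : QCat Q} (F : QFun D E) : Prop :=
  ∀ Y : E.Obj, ∃ X : D.Obj, E.iso Y (F.obj X)

/-- Equivalence of `Q`-categories. -/
def QEquiv {Q : Quantaloid.{u}} (D E : QCat Q) : Prop :=
  ∃ (F : QFun D E) (G : QFun E D),
    (∀ X, D.iso (G.obj (F.obj X)) X) ∧ (∀ Y, E.iso (F.obj (G.obj Y)) Y)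

/-- Isomorphism of `Q`-categories. -/
def QIso {Q : Quantaloid.{u}} (D E : QCat Q) : Prop :=
  ∃ (F : QFun D E) (G : QFun E D),
    (∀ X, G.obj (F.obj X) = X) ∧ (∀ Y, F.obj (G.obj Y) = Y)

/-- Tensor: `Y = f ⊗ X` iff `E(Y,−) = E(X,−) ↙ f`. -/
structure IsTensor {Q : Quantaloid.{u}} (E : QCat Q) {T : Q.Obj} (X : E.Obj)
    (f : Q.Hom (E.ext X) T) (Y : E.Obj) : Prop where
  ext : E.ext Y = T
  hom : ∀ Z : E.Obj, Q.cast ext rfl (E.hom Y Z) = Q.lda (E.hom X Z) f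

/-- Cotensor: `Y = g ⤳ X` iff `E(−,Y) = g ↘ E(−,X)`. -/
structure IsCotensor {Q : Quantaloid.{u}} (E : QCat Q) {T : Q.Obj} (X : E.Obj)
    (g : Q.Hom T (E.ext X)) (Y : E.Obj) : Prop where
  ext : E.ext Y = T
  hom : ∀ Z : E.Obj, Q.cast rfl ext (E.hom Z Y) = Q.rda g (E.hom Z X)
/-! ## The Isbell adjunction and its fixed points -/

section MCat

variable {Q : Quantaloid.{u}} {D E : QCat Q}

/-- The Isbell upper map of a `Q`-distributor `Φ : D ⇸ E` on (pre)sheaves: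
`Φ↑σ = Φ ↙ σ`. -/
def isbellUp (Φ : QRel Q D E) {T : Q.Obj} (σ : Sink D T) : Source E T :=
  QRel.lda Φ σ

/-- The Isbell lower map of a `Q`-distributor `Φ : D ⇸ E` on (co)presheaves:
`Φ↓τ = τ ↘ Φ`. -/
def isbellDown (Φ : QRel Q D E) {T : Q.Obj} (τ : Source E T) : Sink D T :=
  QRel.rda τ Φ

/-- `MΦ = Fix(Φ↓Φ↑)`: the full `Q`-subcategory of the presheaf `Q`-category of `D`
consisting of the presheaves fixed by the Isbell adjunction induced by `Φ`. -/
def MCat (Φ : QRel Q D E) : QCat Q where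
  Obj := Σ T : Q.Obj, {σ : Sink D T // IsDist σ ∧ isbellDown Φ (isbellUp Φ σ) = σ}
  ext p := p.1
  hom p q := QRel.lda q.2.1 p.2.1 PUnit.unit PUnit.unit
  one_le p := by
    refine le_iInf fun X => Quantaloid.le_lda.mp ?_
    exact le_of_eq (Q.one_comp _)
  comp_le p q r := by
    refine le_iInf fun X => Quantaloid.le_lda.mp ?_
    erw [Q.comp_assoc]
    have h1 : Q.comp (QRel.lda q.2.1 p.2.1 PUnit.unit PUnit.unit) (p.2.1 X PUnit.unit) ≤
        q.2.1 X PUnit.unit := by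
      refine le_trans (Quantaloid.comp_mono_left (iInf_le _ X) _) ?_
      exact Quantaloid.comp_lda_le _ _
    refine le_trans (Quantaloid.comp_mono_right _ h1) ?_
    refine le_trans (Quantaloid.comp_mono_left (iInf_le _ X) _) ?_
    exact Quantaloid.comp_lda_le _ _

end MCat
/-! ## Concrete categories over a base category -/

open CategoryTheory

/-- Transport of a morphism of `B` along equalities of objects. -/
def hcast {B : Type u} [Category.{u} B] {S S' T T' : B} (hS : S = S') (hT : T = T')
    (f : S ⟶ T) : S' ⟶ T' :=
  hS ▸ hT ▸ f

/-- Transport of a set of morphisms of `B` along equalities of objects. -/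
def scast {B : Type u} [Category.{u} B] {S S' T T' : B} (hS : S = S') (hT : T = T')
    (s : Set (S ⟶ T)) : Set (S' ⟶ T') :=
  hcast hS hT '' s

theorem hcast_hcast {B : Type u} [Category.{u} B] {S S' S'' T T' T'' : B}
    (h1 : S = S') (h2 : T = T') (h3 : S' = S'') (h4 : T' = T'') (f : S ⟶ T) :
    hcast h3 h4 (hcast h1 h2 f) = hcast (h1.trans h3) (h2.trans h4) f := by
  subst h1; subst h2; subst h3; subst h4; rfl

/-- A concrete category over a base category `B`, described by its objects, extents
and hom-sets of `B`-morphisms. -/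
structure ConcCat (B : Type u) [Category.{u} B] : Type (u + 1) where
  Obj : Type u
  ext : Obj → B
  hom : ∀ X Y : Obj, Set (ext X ⟶ ext Y)
  id_mem : ∀ X, 𝟙 (ext X) ∈ hom X X
  comp_mem : ∀ {X Y Z : Obj} {f : ext X ⟶ ext Y} {g : ext Y ⟶ ext Z},
      f ∈ hom X Y → g ∈ hom Y Z → f ≫ g ∈ hom X Z

variable {B : Type u} [Category.{u} B]

/-- A concrete functor over `B`. -/
structure ConcFun (D E : ConcCat B) : Type u where
  obj : D.Obj → E.Obj
  ext : ∀ X, E.ext (obj X) = D.ext X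
  mem : ∀ {X Y : D.Obj} {f : D.ext X ⟶ D.ext Y}, f ∈ D.hom X Y →
      hcast (ext X).symm (ext Y).symm f ∈ E.hom (obj X) (obj Y)

/-- The underlying (pre)order of a concrete category: `X ≤ Y` iff `|X| = |Y|` and
`1_{|X|} ∈ E(X,Y)`. -/
def ConcCat.le (E : ConcCat B) (X Y : E.Obj) : Prop :=
  ∃ h : E.ext X = E.ext Y, hcast rfl h (𝟙 (E.ext X)) ∈ E.hom X Y

/-- `X ≅ Y` in the underlying order of a concrete category. -/
def ConcCat.iso (E : ConcCat B) (X Y : E.Obj) : Prop :=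
  E.le X Y ∧ E.le Y X

/-- The identity concrete functor. -/
def ConcFun.id (E : ConcCat B) : ConcFun E E where
  obj X := X
  ext _ := rfl
  mem hf := hf

/-- Composition of concrete functors. -/
def ConcFun.comp {C D E : ConcCat B} (G : ConcFun D E) (F : ConcFun C D) :
    ConcFun C E where
  obj X := G.obj (F.obj X)
  ext X := (G.ext (F.obj X)).trans (F.ext X)
  mem {X Y f} hf := by
    have h := G.mem (F.mem hf)
    rw [hcast_hcast] at h
    exact h

/-- The full concrete subcategory on the objects satisfying `P`. -/
def ConcCat.full (E : ConcCat B) (P : E.Obj → Prop) : ConcCat B where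
  Obj := {X : E.Obj // P X}
  ext X := E.ext X.1
  hom X Y := E.hom X.1 Y.1
  id_mem X := E.id_mem X.1
  comp_mem hf hg := E.comp_mem hf hg

/-- The inclusion concrete functor of a full subcategory. -/
def ConcCat.incl (E : ConcCat B) (P : E.Obj → Prop) : ConcFun (E.full P) E where
  obj X := X.1
  ext _ := rfl
  mem hf := hf

/-- The full subcategory of fixed points of an endo concrete functor. -/
def ConcCat.fix (E : ConcCat B) (F : ConcFun E E) : ConcCat B :=
  E.full (fun X => E.iso (F.obj X) X)

/-- A Galois correspondence `(L,R)` between concrete categories: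
`E(LX,Y) = D(X,RY)` as subsets of `B(|X|,|Y|)`. -/
def Galois {D E : ConcCat B} (L : ConcFun D E) (R : ConcFun E D) : Prop :=
  ∀ (X : D.Obj) (Y : E.Obj),
    scast (L.ext X) rfl (E.hom (L.obj X) Y) = scast rfl (R.ext Y) (D.hom X (R.obj Y))

/-- An essentially surjective concrete functor. -/
def ConcFun.EssSurj {D E : ConcCat B} (F : ConcFun D E) : Prop :=
  ∀ Y : E.Obj, ∃ X : D.Obj, E.iso Y (F.obj X)

/-- Concrete equivalence of concrete categories. -/
def ConcEquiv (D E : ConcCat B) : Prop :=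
  ∃ (F : ConcFun D E) (G : ConcFun E D),
    (∀ X, D.iso (G.obj (F.obj X)) X) ∧ (∀ Y, E.iso (F.obj (G.obj Y)) Y)

/-- `Y` is an initial lifting of the `E`-structured source `(g_i : T → |X_i|)`. -/
structure IsInitialLifting (E : ConcCat B) {T : B} {ι : Type u} (X : ι → E.Obj)
    (g : ∀ i, T ⟶ E.ext (X i)) (Y : E.Obj) : Prop where
  ext : E.ext Y = T
  mem : ∀ i, hcast ext.symm rfl (g i) ∈ E.hom Y (X i)
  initial : ∀ (Z : E.Obj) (f : E.ext Z ⟶ T),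
      (∀ i, f ≫ g i ∈ E.hom Z (X i)) → hcast rfl ext.symm f ∈ E.hom Z Y

/-- `Y` is a final lifting of the `E`-structured sink `(f_i : |X_i| → T)`. -/
structure IsFinalLifting (E : ConcCat B) {T : B} {ι : Type u} (X : ι → E.Obj)
    (f : ∀ i, E.ext (X i) ⟶ T) (Y : E.Obj) : Prop where
  ext : E.ext Y = T
  mem : ∀ i, hcast rfl ext.symm (f i) ∈ E.hom (X i) Y
  final : ∀ (Z : E.Obj) (g : T ⟶ E.ext Z),
      (∀ i, f i ≫ g ∈ E.hom (X i) Z) → hcast ext.symm rfl g ∈ E.hom Y Z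

/-- A concrete category is topological over `B` if every structured source admits
an initial lifting. -/
def Topological (E : ConcCat B) : Prop :=
  ∀ (T : B) (ι : Type u) (X : ι → E.Obj) (g : ∀ i, T ⟶ E.ext (X i)),
    ∃ Y : E.Obj, IsInitialLifting E X g Y

/-- A concrete functor `F : D → E` is initially dense if every object of `E` is the
domain of an initial source with codomains in the image of `F`. -/
def InitiallyDense {D E : ConcCat B} (F : ConcFun D E) : Prop :=
  ∀ Y : E.Obj, ∃ (ι : Type u) (X : ι → D.Obj) (g : ∀ i, E.ext Y ⟶ E.ext (F.obj (X i))),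
    (∀ i, g i ∈ E.hom Y (F.obj (X i))) ∧
    ∀ (Z : E.Obj) (f : E.ext Z ⟶ E.ext Y),
      (∀ i, f ≫ g i ∈ E.hom Z (F.obj (X i))) → f ∈ E.hom Z Y

/-- A concrete functor `F : D → E` is finally dense if every object of `E` is the
codomain of a final sink with domains in the image of `F`. -/
def FinallyDense {D E : ConcCat B} (F : ConcFun D E) : Prop :=
  ∀ Y : E.Obj, ∃ (ι : Type u) (X : ι → D.Obj) (f : ∀ i, E.ext (F.obj (X i)) ⟶ E.ext Y),
    (∀ i, f i ∈ E.hom (F.obj (X i)) Y) ∧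
    ∀ (Z : E.Obj) (g : E.ext Y ⟶ E.ext Z),
      (∀ i, f i ≫ g ∈ E.hom (F.obj (X i)) Z) → g ∈ E.hom Y Z
/-! ## The free quantaloid and the `QB`-category associated to a concrete category -/

/-- The free quantaloid on a category `B`: hom-lattices are powersets of hom-sets,
with elementwise composition. -/
def freeQuantaloid (B : Type u) [Category.{u} B] : Quantaloid.{u} where
  Obj := B
  Hom S T := Set (S ⟶ T)
  lat _ _ := inferInstance
  comp := fun {S T U} g f => {h | ∃ a ∈ f, ∃ b ∈ g, a ≫ b = h}
  one S := {𝟙 S}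
  comp_assoc := by
    intro S T U V w v u
    ext h
    constructor
    · rintro ⟨a, ha, b, ⟨c, hc, d, hd, rfl⟩, rfl⟩
      exact ⟨a ≫ c, ⟨a, ha, c, hc, rfl⟩, d, hd, by simp⟩
    · rintro ⟨a, ⟨c, hc, e, he, rfl⟩, b, hb, rfl⟩
      exact ⟨c, hc, e ≫ b, ⟨e, he, b, hb, rfl⟩, by simp⟩
  comp_one := by
    intro S T u
    ext h
    simp
  one_comp := by
    intro S T u
    ext h
    simp
  comp_sSup := by
    intro S T U v s
    ext h
    simp only [Set.sSup_eq_sUnion, Set.mem_sUnion, Set.iSup_eq_iUnion, Set.mem_iUnion,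
      Set.mem_setOf_eq]
    constructor
    · rintro ⟨a, ⟨t, ht, hat⟩, b, hb, rfl⟩
      exact ⟨t, ht, a, hat, b, hb, rfl⟩
    · rintro ⟨t, ht, a, hat, b, hb, rfl⟩
      exact ⟨a, ⟨t, ht, hat⟩, b, hb, rfl⟩
  sSup_comp := by
    intro S T U s u
    ext h
    simp only [Set.sSup_eq_sUnion, Set.mem_sUnion, Set.iSup_eq_iUnion, Set.mem_iUnion,
      Set.mem_setOf_eq]
    constructor
    · rintro ⟨a, ha, b, ⟨t, ht, hbt⟩, rfl⟩
      exact ⟨t, ht, a, ha, b, hbt, rfl⟩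
    · rintro ⟨t, ht, a, ha, b, hbt, rfl⟩
      exact ⟨a, ha, b, ⟨t, ht, hbt⟩, rfl⟩

variable {B : Type u} [Category.{u} B]

instance {S T : B} : Membership (S ⟶ T) ((freeQuantaloid B).Hom S T) :=
  inferInstanceAs (Membership (S ⟶ T) (Set (S ⟶ T)))

theorem mem_qcast {S S' T T' : B} (hS : S = S') (hT : T = T')
    (s : Set (S ⟶ T)) (f : S' ⟶ T') :
    f ∈ (freeQuantaloid B).cast hS hT s ↔ hcast hS.symm hT.symm f ∈ s := by
  subst hS; subst hT; exact Iff.rfl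

/-- The `QB`-category associated to a concrete category over `B`. -/
def ConcCat.bar (E : ConcCat B) : QCat (freeQuantaloid B) where
  Obj := E.Obj
  ext := E.ext
  hom := E.hom
  one_le X := by
    intro h hh
    rcases hh with rfl
    exact E.id_mem X
  comp_le X Y Z := by
    rintro h ⟨a, ha, b, hb, rfl⟩
    exact E.comp_mem ha hb

/-- The `QB`-functor associated to a concrete functor over `B`. -/
def ConcFun.bar {D E : ConcCat B} (F : ConcFun D E) : QFun D.bar E.bar where
  obj := F.obj
  ext := F.ext
  hom_le X Y := by
    intro f hf
    exact (mem_qcast (F.ext X) (F.ext Y) _ f).mpr (F.mem hf)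

/-- The source on the `QB`-category `Ē` associated to an `E`-structured source
`(g_i : T → |X_i|)`, given by `τ̄(X) = {g_i ∣ X_i = X}`. -/
def barSource (E : ConcCat B) {T : B} {ι : Type u} (X : ι → E.Obj)
    (g : ∀ i, T ⟶ E.ext (X i)) : Source E.bar T :=
  fun _ Z => {f | ∃ (i : ι) (h : X i = Z), hcast rfl (congrArg E.ext h) (g i) = f}

/-- The sink on the `QB`-category `Ē` associated to an `E`-structured sink
`(f_i : |X_i| → T)`, given by `σ̄(X) = {f_i ∣ X_i = X}`. -/
def barSink (E : ConcCat B) {T : B} {ι : Type u} (X : ι → E.Obj)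
    (f : ∀ i, E.ext (X i) ⟶ T) : Sink E.bar T :=
  fun Z _ => {h | ∃ (i : ι) (hE : X i = Z), hcast (congrArg E.ext hE) rfl (f i) = h}
/-!
Everything happens inside the image of `R`: every object of `Fix(RL)` is `≅ RLA` for some `A`,
and `RLA = R(LA)`. Given an equivalence `X ≃ Fix(RL)`, put `F A := RLA` and `G B' := RB'`
transported to `X`; then `X(FA,GB') = D(RLA,RB') = D(A,RB') = E(LA,B')`. Conversely, the hom
condition and the Galois correspondence give `X(FA,GB') = D(A,RB')`, so that `F(RB') ≅ GB'`;
then `x ≅ GB' ↦ RB'` and `P ↦ F P` are mutually inverse up to `≅`.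
-/

namespace ConcCat

variable {E : ConcCat B} {X X' Y Y' Z : E.Obj} {S T U : B}

/-- `f` is an `E`-morphism `X → Y`, for a `B`-morphism whose endpoints are only propositionally
equal to the extents of `X` and `Y`; this keeps transports out of all statements below. -/
def IsHom (E : ConcCat B) (X Y : E.Obj) {S T : B} (f : S ⟶ T) : Prop :=
  ∃ (hS : S = E.ext X) (hT : T = E.ext Y), hcast hS hT f ∈ E.hom X Y

theorem isHom_iff_mem {f : E.ext X ⟶ E.ext Y} : E.IsHom X Y f ↔ f ∈ E.hom X Y :=
  ⟨fun ⟨_, _, hf⟩ => hf, fun hf => ⟨rfl, rfl, hf⟩⟩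

theorem isHom_id (X : E.Obj) : E.IsHom X X (𝟙 (E.ext X)) :=
  isHom_iff_mem.2 (E.id_mem X)

theorem IsHom.comp {f : S ⟶ T} {g : T ⟶ U} (hf : E.IsHom X Y f) (hg : E.IsHom Y Z g) :
    E.IsHom X Z (f ≫ g) := by
  obtain ⟨rfl, rfl, hf⟩ := hf
  obtain ⟨_, rfl, hg⟩ := hg
  exact ⟨rfl, rfl, E.comp_mem hf hg⟩

theorem le_of_isHom_id (h : E.IsHom X Y (𝟙 S)) : E.le X Y := by
  obtain ⟨rfl, hT, h⟩ := h
  exact ⟨hT, h⟩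

theorem IsHom.id_of_le (h : E.le X Y) (hS : S = E.ext X) : E.IsHom X Y (𝟙 S) := by
  subst hS
  exact ⟨rfl, h.1, h.2⟩

theorem IsHom.of_le_left (h : E.le X' X) {f : S ⟶ T} (hf : E.IsHom X Y f) :
    E.IsHom X' Y f := by
  simpa using (IsHom.id_of_le h (hf.1.trans h.1.symm)).comp hf

theorem IsHom.of_le_right {f : S ⟶ T} (hf : E.IsHom X Y f) (h : E.le Y Y') :
    E.IsHom X Y' f := by
  simpa using hf.comp (IsHom.id_of_le h hf.2.1)

theorem le.trans (h : E.le X Y) (h' : E.le Y Z) : E.le X Z :=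
  le_of_isHom_id ((IsHom.id_of_le h rfl).of_le_right h')

theorem iso.symm (h : E.iso X Y) : E.iso Y X := ⟨h.2, h.1⟩

theorem iso.trans (h : E.iso X Y) (h' : E.iso Y Z) : E.iso X Z :=
  ⟨h.1.trans h'.1, h'.2.trans h.2⟩

theorem isHom_iff_exists_mem_scast {U V : B} (hU : E.ext X = U) (hV : E.ext Y = V)
    {f : S ⟶ T} :
    E.IsHom X Y f ↔ ∃ (hS : S = U) (hT : T = V), hcast hS hT f ∈ scast hU hV (E.hom X Y) := by
  subst hU hV
  rw [show scast rfl rfl (E.hom X Y) = E.hom X Y from Set.image_id _]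
  rfl

theorem scast_hom_eq_iff {E₁ E₂ : ConcCat B} {X₁ Y₁ : E₁.Obj} {X₂ Y₂ : E₂.Obj} {U V : B}
    (h₁ : E₁.ext X₁ = U) (h₂ : E₁.ext Y₁ = V) (h₃ : E₂.ext X₂ = U) (h₄ : E₂.ext Y₂ = V) :
    scast h₁ h₂ (E₁.hom X₁ Y₁) = scast h₃ h₄ (E₂.hom X₂ Y₂) ↔
      ∀ {S T : B} (f : S ⟶ T), E₁.IsHom X₁ Y₁ f ↔ E₂.IsHom X₂ Y₂ f := by
  simp only [isHom_iff_exists_mem_scast h₁ h₂, isHom_iff_exists_mem_scast h₃ h₄]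
  refine ⟨fun h S T f => by rw [h], fun h => Set.ext fun f => ⟨fun hf => ?_, fun hf => ?_⟩⟩
  · obtain ⟨_, _, hf⟩ := (h f).1 ⟨rfl, rfl, hf⟩
    exact hf
  · obtain ⟨_, _, hf⟩ := (h f).2 ⟨rfl, rfl, hf⟩
    exact hf

end ConcCat

open ConcCat

namespace ConcFun

variable {C D E : ConcCat B} {S T : B}

/-- The extents agree because identities are preserved. -/
def ofIsHom (obj : D.Obj → E.Obj)
    (map : ∀ {X Y : D.Obj} {S T : B} {f : S ⟶ T}, D.IsHom X Y f → E.IsHom (obj X) (obj Y) f) :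
    ConcFun D E where
  obj := obj
  ext X := (map (isHom_id X)).1.symm
  mem hf := by
    obtain ⟨_, _, hf⟩ := map (isHom_iff_mem.2 hf)
    exact hf

theorem isHom_map (F : ConcFun D E) {X Y : D.Obj} {f : S ⟶ T} (hf : D.IsHom X Y f) :
    E.IsHom (F.obj X) (F.obj Y) f := by
  obtain ⟨rfl, rfl, hf⟩ := hf
  exact ⟨(F.ext X).symm, (F.ext Y).symm, F.mem hf⟩

theorem map_le (F : ConcFun D E) {X Y : D.Obj} (h : D.le X Y) : E.le (F.obj X) (F.obj Y) :=
  le_of_isHom_id (F.isHom_map (IsHom.id_of_le h rfl))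

theorem map_iso (F : ConcFun D E) {X Y : D.Obj} (h : D.iso X Y) : E.iso (F.obj X) (F.obj Y) :=
  ⟨F.map_le h.1, F.map_le h.2⟩

theorem isHom_map_iff_of_comp_iso {F : ConcFun D E} {G : ConcFun E D}
    (hGF : ∀ X, D.iso (G.obj (F.obj X)) X) {X Y : D.Obj} {f : S ⟶ T} :
    E.IsHom (F.obj X) (F.obj Y) f ↔ D.IsHom X Y f :=
  ⟨fun hf => ((G.isHom_map hf).of_le_left (hGF X).2).of_le_right (hGF Y).1, F.isHom_map⟩

theorem essSurj_of_comp_iso {F : ConcFun D E} {G : ConcFun E D}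
    (hFG : ∀ Y, E.iso (F.obj (G.obj Y)) Y) : F.EssSurj :=
  fun Y => ⟨G.obj Y, (hFG Y).symm⟩

theorem EssSurj.comp {F : ConcFun C D} {G : ConcFun D E} (hF : F.EssSurj) (hG : G.EssSurj) :
    (G.comp F).EssSurj := by
  intro Z
  obtain ⟨Y, hY⟩ := hG Z
  obtain ⟨X, hX⟩ := hF Y
  exact ⟨X, hY.trans (G.map_iso hX)⟩

noncomputable def EssSurj.preimage {F : ConcFun D E} (hF : F.EssSurj) (Y : E.Obj) : D.Obj :=
  (hF Y).choose

theorem EssSurj.iso_obj_preimage {F : ConcFun D E} (hF : F.EssSurj) (Y : E.Obj) :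
    E.iso Y (F.obj (hF.preimage Y)) :=
  (hF Y).choose_spec

end ConcFun

namespace Galois

variable {D E : ConcCat B} {L : ConcFun D E} {R : ConcFun E D} {S T : B}

theorem isHom_iff (gal : Galois L R) (A : D.Obj) (B' : E.Obj) {f : S ⟶ T} :
    E.IsHom (L.obj A) B' f ↔ D.IsHom A (R.obj B') f :=
  (scast_hom_eq_iff (L.ext A) rfl rfl (R.ext B')).1 (gal A B') f

theorem le_unit (gal : Galois L R) (A : D.Obj) : D.le A (R.obj (L.obj A)) :=
  le_of_isHom_id ((gal.isHom_iff A (L.obj A)).1 (isHom_id _))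

theorem counit_le (gal : Galois L R) (B' : E.Obj) : E.le (L.obj (R.obj B')) B' :=
  le_of_isHom_id ((gal.isHom_iff (R.obj B') B').2 (isHom_id _))

theorem rlr_iso (gal : Galois L R) (B' : E.Obj) : D.iso (R.obj (L.obj (R.obj B'))) (R.obj B') :=
  ⟨R.map_le (gal.counit_le B'), gal.le_unit (R.obj B')⟩

theorem isHom_unit_left_iff (gal : Galois L R) {A : D.Obj} {B' : E.Obj} {f : S ⟶ T} :
    D.IsHom (R.obj (L.obj A)) (R.obj B') f ↔ D.IsHom A (R.obj B') f :=
  ⟨fun hf => hf.of_le_left (gal.le_unit A), fun hf => R.isHom_map ((gal.isHom_iff _ _).2 hf)⟩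

/-- `R` corestricted to `Fix(RL)`. -/
def toFix (gal : Galois L R) : ConcFun E (D.fix (R.comp L)) where
  obj B' := ⟨R.obj B', gal.rlr_iso B'⟩
  ext B' := R.ext B'
  mem hf := R.mem hf

theorem essSurj_toFix_comp (gal : Galois L R) : (gal.toFix.comp L).EssSurj :=
  fun P => ⟨P.1, P.2.symm⟩

theorem essSurj_toFix (gal : Galois L R) : gal.toFix.EssSurj :=
  fun P => ⟨L.obj P.1, P.2.symm⟩

end Galois

/-- `X(FA, GB') = D(A, RB')` for all `A` and `B'`. -/
def RepresentsHoms {D E X : ConcCat B} (F : ConcFun D X) (G : ConcFun E X) (R : ConcFun E D) :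
    Prop :=
  ∀ A B' {S T : B} (f : S ⟶ T), X.IsHom (F.obj A) (G.obj B') f ↔ D.IsHom A (R.obj B') f

namespace RepresentsHoms

variable {D E X : ConcCat B} {L : ConcFun D E} {R : ConcFun E D} {F : ConcFun D X}
  {G : ConcFun E X}

theorem le_iff (hFG : RepresentsHoms F G R) {A : D.Obj} {B' : E.Obj} :
    X.le (F.obj A) (G.obj B') ↔ D.le A (R.obj B') :=
  ⟨fun h => le_of_isHom_id ((hFG A B' _).1 (IsHom.id_of_le h (F.ext A).symm)),
    fun h => le_of_isHom_id ((hFG A B' _).2 (IsHom.id_of_le h rfl))⟩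

theorem iso_obj_R (hFG : RepresentsHoms F G R) (hF : F.EssSurj) (B' : E.Obj) :
    X.iso (F.obj (R.obj B')) (G.obj B') := by
  refine ⟨hFG.le_iff.2 (le_of_isHom_id (isHom_id _)), ?_⟩
  obtain ⟨A, hA⟩ := hF (G.obj B')
  exact hA.1.trans (F.map_le (hFG.le_iff.1 hA.2))

theorem iso_R_of_iso (hFG : RepresentsHoms F G R) (gal : Galois L R) (hF : F.EssSurj)
    {A : D.Obj} (hA : D.iso (R.obj (L.obj A)) A) {B' : E.Obj}
    (h : X.iso (F.obj A) (G.obj B')) : D.iso (R.obj B') A := by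
  have hFR : X.le (F.obj (R.obj B')) (G.obj (L.obj A)) :=
    (hFG.iso_obj_R hF B').1.trans (h.2.trans (hFG.le_iff.2 (gal.le_unit A)))
  exact ⟨(hFG.le_iff.1 hFR).trans hA.1, hFG.le_iff.1 h.1⟩

/-- Sends `x ≅ G B'` to `R B'`. -/
noncomputable def toFix (hFG : RepresentsHoms F G R) (gal : Galois L R) (hF : F.EssSurj)
    (hG : G.EssSurj) : ConcFun X (D.fix (R.comp L)) :=
  ConcFun.ofIsHom (fun x => gal.toFix.obj (hG.preimage x)) fun {x y _ _ _} hf =>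
    (hFG _ _ _).1 ((((hf.of_le_left (hG.iso_obj_preimage x).2).of_le_right
      (hG.iso_obj_preimage y).1).of_le_left (hFG.iso_obj_R hF _).1))

theorem concEquiv_fix (hFG : RepresentsHoms F G R) (gal : Galois L R) (hF : F.EssSurj)
    (hG : G.EssSurj) : ConcEquiv X (D.fix (R.comp L)) :=
  ⟨hFG.toFix gal hF hG, F.comp (D.incl _),
    fun x => (hFG.iso_obj_R hF _).trans (hG.iso_obj_preimage x).symm,
    fun P => hFG.iso_R_of_iso gal hF P.2 (hG.iso_obj_preimage (F.obj P.1))⟩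

end RepresentsHoms

/-- Theorem 7.6: for a Galois correspondence `(L,R)` between concrete
categories `D` and `E` over `B`, a concrete category `X` over `B` is concretely
equivalent to `Fix(RL)` if and only if there exist essentially surjective concrete
functors `F : D → X` and `G : E → X` with `E(LA,B') = X(FA,GB')` as subsets of
`B(|A|,|B'|)`. -/
theorem concrete_fix_representation {B : Type u} [CategoryTheory.Category.{u} B]
    {D E : ConcCat B} (L : ConcFun D E) (R : ConcFun E D) (gal : Galois L R)
    (X : ConcCat B) :
    ConcEquiv X (ConcCat.fix D (ConcFun.comp R L)) ↔
      ∃ (F : ConcFun D X) (G : ConcFun E X), F.EssSurj ∧ G.EssSurj ∧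
        ∀ (A : D.Obj) (B' : E.Obj),
          scast (L.ext A) rfl (E.hom (L.obj A) B') =
            scast (F.ext A) (G.ext B') (X.hom (F.obj A) (G.obj B')) := by
  constructor
  · rintro ⟨Φ, Ψ, hΨΦ, hΦΨ⟩
    have hΨ := ConcFun.essSurj_of_comp_iso hΨΦ
    refine ⟨Ψ.comp (gal.toFix.comp L), Ψ.comp gal.toFix, gal.essSurj_toFix_comp.comp hΨ,
      gal.essSurj_toFix.comp hΨ, fun A B' => (scast_hom_eq_iff _ _ _ _).2 fun f => ?_⟩
    calc E.IsHom (L.obj A) B' f ↔ D.IsHom A (R.obj B') f := gal.isHom_iff A B'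
      _ ↔ D.IsHom (R.obj (L.obj A)) (R.obj B') f := gal.isHom_unit_left_iff.symm
      _ ↔ (D.fix (R.comp L)).IsHom (gal.toFix.obj (L.obj A)) (gal.toFix.obj B') f := Iff.rfl
      _ ↔ X.IsHom (Ψ.obj (gal.toFix.obj (L.obj A))) (Ψ.obj (gal.toFix.obj B')) f :=
        (ConcFun.isHom_map_iff_of_comp_iso hΦΨ).symm
  · rintro ⟨F, G, hF, hG, hom_eq⟩
    have hFG : RepresentsHoms F G R := fun A B' _ _ f =>
      ((scast_hom_eq_iff _ _ _ _).1 (hom_eq A B') f).symm.trans (gal.isHom_iff A B')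
    exact hFG.concEquiv_fix gal hF hG
end

section
/- Let Q be a quantaloid, D a separated total Q-category, and E a full Q-subcategory of D that is simultaneously dense and codense in D (i.e., the inclusion Q-functor E ↪ D is both dense and codense). Then D is the MacNeille completion of E: D is isomorphic to M(E) := Fix(E↓E↑), the Q-category of fixed points of the Isbell adjunction induced by the identity Q-distributor E : E ⇸ E. -/
universe u

/-! ## Concrete categories over a base category -/

open CategoryTheory

variable {B : Type u} [Category.{u} B]

variable {B : Type u} [Category.{u} B]

/-!
Write `E` for the full subcategory of `D` on `P`. Density makes every `Y` the colimit of the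
inclusion weighted by its own restricted presheaf `D(−,Y)|E`, and codensity makes every colimit
`colim_σ E` satisfy `D(−, colim_σ E)|E = E↓E↑σ`. Hence `Y ↦ D(−,Y)|E` lands in `M(E)`, and sending
a fixed presheaf `σ` to `colim_σ E`, which exists because `D` is total, inverts it: one composite
is the identity because `D` is separated, the other because `σ` is a fixed point.
-/

namespace Quantaloid

variable {Q : Quantaloid.{u}}

theorem lda_antitone {S T U : Q.Obj} (w : Q.Hom S U) {u u' : Q.Hom S T} (h : u ≤ u') :
    Q.lda w u' ≤ Q.lda w u :=
  le_lda.mp (le_trans (comp_mono_right _ h) (comp_lda_le w u'))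

theorem rda_antitone {S T U : Q.Obj} {v v' : Q.Hom T U} (h : v ≤ v') (w : Q.Hom S U) :
    Q.rda v' w ≤ Q.rda v w :=
  le_rda.mp (le_trans (comp_mono_left h _) (comp_rda_le v' w))

theorem comp_iSup {ι : Sort*} {S T U : Q.Obj} (v : Q.Hom T U) (f : ι → Q.Hom S T) :
    Q.comp v (⨆ i, f i) = ⨆ i, Q.comp v (f i) := by
  rw [iSup, Q.comp_sSup, iSup_range]

theorem one_le_cast_iff {S S' : Q.Obj} (h : S = S') (u : Q.Hom S S') :
    Q.one S' ≤ Q.cast h rfl u ↔ Q.cast rfl h (Q.one S) ≤ u := by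
  subst h; rfl

theorem cast_rfl_one {S S' : Q.Obj} (h : S = S') :
    Q.cast rfl h.symm (Q.one S') = Q.cast h rfl (Q.one S) := by
  subst h; rfl

end Quantaloid

theorem QCat.eq_of_cast_hom_eq {Q : Quantaloid.{u}} {D : QCat Q} (hsep : D.Separated)
    {Y Y' : D.Obj} (h : D.ext Y = D.ext Y')
    (hhom : ∀ Z, Q.cast h rfl (D.hom Y Z) = D.hom Y' Z) : Y = Y' := by
  refine hsep Y Y' ⟨⟨h, ?_⟩, ⟨h.symm, ?_⟩⟩
  · rw [← Quantaloid.one_le_cast_iff, hhom]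
    exact D.one_le Y'
  · rw [← hhom, Quantaloid.cast_rfl_one]
    exact Quantaloid.cast_mono h rfl (D.one_le Y)

theorem IsColim.eq {Q : Quantaloid.{u}} {D E : QCat Q} {F : QFun D E} {T : Q.Obj}
    {σ : Sink D T} {Y Y' : E.Obj} (hsep : E.Separated) (hY : IsColim F σ Y)
    (hY' : IsColim F σ Y') : Y = Y' :=
  E.eq_of_cast_hom_eq hsep (hY.ext.trans hY'.ext.symm) fun Z =>
    calc Q.cast (hY.ext.trans hY'.ext.symm) rfl (E.hom Y Z)
        = Q.cast hY'.ext.symm rfl (Q.cast hY.ext rfl (E.hom Y Z)) :=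
          (Quantaloid.cast_cast _ _ _ _ _).symm
      _ = Q.cast hY'.ext.symm rfl (Q.cast hY'.ext rfl (E.hom Y' Z)) := by rw [hY.hom, hY'.hom]
      _ = E.hom Y' Z := by rw [Quantaloid.cast_cast]; rfl

namespace QCat

variable {Q : Quantaloid.{u}} {D : QCat Q} {P : D.Obj → Prop}

def restrictHomTo (D : QCat Q) (P : D.Obj → Prop) (Y : D.Obj) : Sink (D.full P) (D.ext Y) :=
  fun X _ => D.hom X.1 Y

def restrictHomFrom (D : QCat Q) (P : D.Obj → Prop) (Y : D.Obj) : Source (D.full P) (D.ext Y) :=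
  fun _ Z => D.hom Y Z.1

theorem isDist_restrictHomTo (Y : D.Obj) : IsDist (D.restrictHomTo P Y) := by
  intro X _
  refine iSup_le fun _ => ?_
  show Q.comp (Q.one (D.ext Y)) _ ≤ _
  erw [Q.one_comp]
  exact iSup_le fun X' => D.comp_le X.1 X'.1 Y

theorem isColim_restrictHomTo (hdense : (D.incl P).Dense) (Y : D.Obj) :
    IsColim (D.incl P) (D.restrictHomTo P Y) Y := by
  obtain ⟨T, σ, hext, hhom⟩ := hdense Y
  subst hext
  have hσ : ∀ Z, D.hom Y Z = ⨅ X : {X // P X}, Q.lda (D.hom X.1 Z) (σ X PUnit.unit) := hhom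
  have hσ_le : ∀ X : {X // P X}, σ X PUnit.unit ≤ D.hom X.1 Y := fun X => by
    have h := Quantaloid.le_lda.mpr
      ((D.one_le Y).trans ((hσ Y).le.trans (iInf_le _ X)))
    erw [Q.one_comp] at h
    exact h
  refine ⟨rfl, fun Z => le_antisymm
    (le_iInf fun X => Quantaloid.le_lda.mp (D.comp_le X.1 Y Z)) ?_⟩
  rw [Quantaloid.cast, hσ Z]
  exact le_iInf fun X => (iInf_le _ X).trans (Quantaloid.lda_antitone _ (hσ_le X))

theorem isLim_restrictHomFrom (hcodense : (D.incl P).Codense) (Y : D.Obj) :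
    IsLim (D.incl P) (D.restrictHomFrom P Y) Y := by
  obtain ⟨T, τ, hext, hhom⟩ := hcodense Y
  subst hext
  have hτ : ∀ W, D.hom W Y = ⨅ X : {X // P X}, Q.rda (τ PUnit.unit X) (D.hom W X.1) := hhom
  have hτ_le : ∀ X : {X // P X}, τ PUnit.unit X ≤ D.hom Y X.1 := fun X => by
    have h := Quantaloid.le_rda.mpr
      ((D.one_le Y).trans ((hτ Y).le.trans (iInf_le _ X)))
    erw [Q.comp_one] at h
    exact h
  refine ⟨rfl, fun W => le_antisymm
    (le_iInf fun X => Quantaloid.le_rda.mp (D.comp_le W Y X.1)) ?_⟩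
  rw [Quantaloid.cast, hτ W]
  exact le_iInf fun X => (iInf_le _ X).trans (Quantaloid.rda_antitone (hτ_le X) _)

theorem isColim_of_isSup {T : Q.Obj} {σ : Sink (D.full P) T} {Y : D.Obj}
    (h : IsSup D (QRel.comp σ (D.incl P).cograph) Y) : IsColim (D.incl P) σ Y := by
  obtain ⟨hext, hhom⟩ := h
  subst hext
  refine ⟨rfl, fun Z => (hhom Z).trans (le_antisymm (le_iInf fun X => ?_) (le_iInf fun W => ?_))⟩
  · refine (iInf_le _ X.1).trans (Quantaloid.lda_antitone _ ?_)
    exact (Q.comp_one _).symm.le.trans ((Quantaloid.comp_mono_right _ (D.one_le X.1)).trans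
      (le_iSup (fun X' : {X // P X} => Q.comp (σ X' PUnit.unit) (D.hom X.1 X'.1)) X))
  · refine Quantaloid.le_lda.mp ?_
    show Q.comp _ (⨆ X : {X // P X}, Q.comp (σ X PUnit.unit) (D.hom W X.1)) ≤ D.hom W Z
    rw [Quantaloid.comp_iSup]
    refine iSup_le fun X => ?_
    erw [← Q.comp_assoc]
    refine (Quantaloid.comp_mono_left ?_ _).trans (D.comp_le W X.1 Z)
    exact (Quantaloid.comp_mono_left (iInf_le _ X) _).trans (Quantaloid.comp_lda_le _ _)

theorem exists_isColim (htot : D.Total) {T : Q.Obj} (σ : Sink (D.full P) T) :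
    ∃ Y, IsColim (D.incl P) σ Y :=
  (htot T _).imp fun _ => isColim_of_isSup

theorem cast_hom_isColim_eq_isbellDown_isbellUp (hcodense : (D.incl P).Codense) {T : Q.Obj}
    {σ : Sink (D.full P) T} {Y : D.Obj} (h : IsColim (D.incl P) σ Y) (X : {X // P X}) :
    Q.cast rfl h.ext (D.hom X.1 Y) =
      isbellDown (D.full P).homRel (isbellUp (D.full P).homRel σ) X PUnit.unit := by
  obtain ⟨hext, hhom⟩ := h
  subst hext
  have hup : ∀ Z : {Z // P Z}, D.hom Y Z.1 = isbellUp (D.full P).homRel σ PUnit.unit Z :=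
    fun Z => hhom Z.1
  exact ((isLim_restrictHomFrom hcodense Y).hom X.1).trans
    (iInf_congr fun Z => congrArg (Q.rda · (D.hom X.1 Z.1)) (hup Z))

theorem isbellDown_isbellUp_restrictHomTo (hdense : (D.incl P).Dense)
    (hcodense : (D.incl P).Codense) (Y : D.Obj) :
    isbellDown (D.full P).homRel (isbellUp (D.full P).homRel (D.restrictHomTo P Y)) =
      D.restrictHomTo P Y := by
  funext X _
  exact (cast_hom_isColim_eq_isbellDown_isbellUp hcodense (isColim_restrictHomTo hdense Y) X).symm

theorem lda_le_cast_hom_isColim (hcodense : (D.incl P).Codense)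
    {T T' : Q.Obj} {σ : Sink (D.full P) T} {σ' : Sink (D.full P) T'}
    (hσ' : isbellDown (D.full P).homRel (isbellUp (D.full P).homRel σ') = σ')
    {Y Y' : D.Obj} (hY : IsColim (D.incl P) σ Y) (hY' : IsColim (D.incl P) σ' Y') :
    QRel.lda σ' σ PUnit.unit PUnit.unit ≤ Q.cast hY.ext hY'.ext (D.hom Y Y') := by
  have hσ'_hom := cast_hom_isColim_eq_isbellDown_isbellUp hcodense hY'
  rw [hσ'] at hσ'_hom
  obtain ⟨hext, hhom⟩ := hY
  have hext' := hY'.ext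
  subst hext hext'
  refine le_of_eq ((iInf_congr fun X => ?_).trans (hhom Y').symm)
  rw [← hσ'_hom X]
  rfl

def toMacNeille (hdense : (D.incl P).Dense) (hcodense : (D.incl P).Codense) :
    QFun D (MCat (D.full P).homRel) where
  obj Y := ⟨D.ext Y, D.restrictHomTo P Y, isDist_restrictHomTo Y,
    isbellDown_isbellUp_restrictHomTo hdense hcodense Y⟩
  ext _ := rfl
  hom_le Y Y' := le_iInf fun X => Quantaloid.le_lda.mp (D.comp_le X.1 Y Y')

noncomputable def ofMacNeille (htot : D.Total) (hcodense : (D.incl P).Codense) :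
    QFun (MCat (D.full P).homRel) D where
  obj p := (exists_isColim htot p.2.1).choose
  ext p := (exists_isColim htot p.2.1).choose_spec.ext
  hom_le p q := lda_le_cast_hom_isColim hcodense q.2.2.2
    (exists_isColim htot p.2.1).choose_spec (exists_isColim htot q.2.1).choose_spec

theorem ofMacNeille_toMacNeille (hsep : D.Separated) (htot : D.Total)
    (hdense : (D.incl P).Dense) (hcodense : (D.incl P).Codense) (Y : D.Obj) :
    (ofMacNeille htot hcodense).obj ((toMacNeille hdense hcodense).obj Y) = Y :=
  (exists_isColim htot _).choose_spec.eq hsep (isColim_restrictHomTo hdense Y)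

theorem toMacNeille_ofMacNeille (htot : D.Total) (hdense : (D.incl P).Dense)
    (hcodense : (D.incl P).Codense) (p : (MCat (D.full P).homRel).Obj) :
    (toMacNeille hdense hcodense).obj ((ofMacNeille htot hcodense).obj p) = p := by
  obtain ⟨T, σ, -, hfix⟩ := p
  have hY := (exists_isColim htot σ).choose_spec
  show (toMacNeille hdense hcodense).obj (exists_isColim htot σ).choose = _
  generalize (exists_isColim htot σ).choose = Y at hY ⊢
  have hσ := cast_hom_isColim_eq_isbellDown_isbellUp hcodense hY
  have hext := hY.ext
  rw [hfix] at hσ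
  subst hext
  have hrestrict : D.restrictHomTo P Y = σ := by
    funext X _
    exact hσ X
  subst hrestrict
  rfl

end QCat

/-- Corollary 7.12: if `D` is a separated total `Q`-category and
its full `Q`-subcategory (on a predicate `P`) is simultaneously dense and codense in
`D`, then `D` is the MacNeille completion of this subcategory, i.e. `D` is isomorphic
to `M(E) = Fix(E↓E↑)` for the identity `Q`-distributor `E` of the subcategory. -/
theorem macNeille_completion_of_dense_codense {Q : Quantaloid.{u}} (D : QCat Q)
    (hsep : D.Separated) (htot : D.Total) (P : D.Obj → Prop)
    (hdense : (D.incl P).Dense) (hcodense : (D.incl P).Codense) :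
    QIso D (MCat (D.full P).homRel) :=
  ⟨QCat.toMacNeille hdense hcodense, QCat.ofMacNeille htot hcodense,
    QCat.ofMacNeille_toMacNeille hsep htot hdense hcodense,
    QCat.toMacNeille_ofMacNeille htot hdense hcodense⟩
end

section
/- A concrete functor F : D → E over a base category B is initially dense (resp. finally dense) if and only if the corresponding QB-functor F̄ : D̄ → Ē between the associated QB-categories is codense (resp. dense). -/
universe u

/-! ## Concrete categories over a base category -/

open CategoryTheory

variable {B : Type u} [Category.{u} B]

variable {B : Type u} [Category.{u} B]

/-! In the free quantaloid a morphism lies in `v ↘ w` iff all its composites with elements of `v`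
lie in `w`. A source `τ` of extent `|Y|` on `D̄` is just a set of legs `u : |Y| → |W|`, and
`Y = lim_τ F̄` says that `f : |Z| → |Y|` is an `E`-morphism iff every `f ≫ u` is an `E`-morphism
`Z → FW`. For a family of legs this is equivalent to being an initial source of `E`-morphisms
(the legs themselves are `E`-morphisms: take `f = 1_{|Y|}`), and families and sets of legs carry
the same information. Dually for sinks and weighted colimits. -/

theorem hcast_refl {S T : B} (hS : S = S) (hT : T = T) (f : S ⟶ T) : hcast hS hT f = f := rfl

namespace ConcCat

variable (E : ConcCat B) {ι : Type*} {Y : E.Obj} {X : ι → E.Obj}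

theorem isInitialSource_iff (g : ∀ i, E.ext Y ⟶ E.ext (X i)) :
    ((∀ i, g i ∈ E.hom Y (X i)) ∧
      ∀ (Z : E.Obj) (f : E.ext Z ⟶ E.ext Y), (∀ i, f ≫ g i ∈ E.hom Z (X i)) → f ∈ E.hom Z Y) ↔
    ∀ (Z : E.Obj) (f : E.ext Z ⟶ E.ext Y), f ∈ E.hom Z Y ↔ ∀ i, f ≫ g i ∈ E.hom Z (X i) := by
  refine ⟨fun ⟨hg, hinit⟩ Z f => ⟨fun hf i => E.comp_mem hf (hg i), hinit Z f⟩, fun h => ?_⟩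
  refine ⟨fun i => ?_, fun Z f => (h Z f).mpr⟩
  simpa only [Category.id_comp] using (h Y (𝟙 _)).mp (E.id_mem Y) i

theorem isFinalSink_iff (f : ∀ i, E.ext (X i) ⟶ E.ext Y) :
    ((∀ i, f i ∈ E.hom (X i) Y) ∧
      ∀ (Z : E.Obj) (g : E.ext Y ⟶ E.ext Z), (∀ i, f i ≫ g ∈ E.hom (X i) Z) → g ∈ E.hom Y Z) ↔
    ∀ (Z : E.Obj) (g : E.ext Y ⟶ E.ext Z), g ∈ E.hom Y Z ↔ ∀ i, f i ≫ g ∈ E.hom (X i) Z := by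
  refine ⟨fun ⟨hf, hfin⟩ Z g => ⟨fun hg i => E.comp_mem (hf i) hg, hfin Z g⟩, fun h => ?_⟩
  refine ⟨fun i => ?_, fun Z g => (h Z g).mpr⟩
  simpa only [Category.comp_id] using (h Y (𝟙 _)).mp (E.id_mem Y) i

end ConcCat

namespace ConcFun

variable {D E : ConcCat B} (F : ConcFun D E)

theorem initiallyDense_iff_exists_legs :
    InitiallyDense F ↔ ∀ Y : E.Obj, ∃ S : Set (Σ W : D.Obj, E.ext Y ⟶ D.ext W),
      ∀ (Z : E.Obj) (f : E.ext Z ⟶ E.ext Y),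
        f ∈ E.hom Z Y ↔ ∀ p ∈ S, f ≫ hcast rfl (F.ext p.1).symm p.2 ∈ E.hom Z (F.obj p.1) := by
  refine forall_congr' fun Y => ?_
  simp only [E.isInitialSource_iff]
  constructor
  · rintro ⟨ι, X, g, h⟩
    refine ⟨Set.range fun i => ⟨X i, hcast rfl (F.ext (X i)) (g i)⟩, fun Z f => ?_⟩
    simpa [hcast_hcast, hcast_refl] using h Z f
  · rintro ⟨S, h⟩
    refine ⟨S, fun p => p.1.1, fun p => hcast rfl (F.ext p.1.1).symm p.1.2, fun Z f => ?_⟩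
    simpa using h Z f

theorem finallyDense_iff_exists_legs :
    FinallyDense F ↔ ∀ Y : E.Obj, ∃ S : Set (Σ W : D.Obj, D.ext W ⟶ E.ext Y),
      ∀ (Z : E.Obj) (g : E.ext Y ⟶ E.ext Z),
        g ∈ E.hom Y Z ↔ ∀ p ∈ S, hcast (F.ext p.1).symm rfl p.2 ≫ g ∈ E.hom (F.obj p.1) Z := by
  refine forall_congr' fun Y => ?_
  simp only [E.isFinalSink_iff]
  constructor
  · rintro ⟨ι, X, f, h⟩
    refine ⟨Set.range fun i => ⟨X i, hcast (F.ext (X i)) rfl (f i)⟩, fun Z g => ?_⟩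
    simpa [hcast_hcast, hcast_refl] using h Z g
  · rintro ⟨S, h⟩
    refine ⟨S, fun p => p.1.1, fun p => hcast (F.ext p.1.1).symm rfl p.1.2, fun Z g => ?_⟩
    simpa using h Z g

end ConcFun

namespace freeQuantaloid

theorem mem_rda {S T U : B} {v : (freeQuantaloid B).Hom T U} {w : (freeQuantaloid B).Hom S U}
    {f : S ⟶ T} : f ∈ (freeQuantaloid B).rda v w ↔ ∀ g ∈ v, f ≫ g ∈ w := by
  refine ⟨fun ⟨s, hs, hf⟩ g hg => hs ⟨f, hf, g, hg, rfl⟩, fun h => ⟨{f}, ?_, rfl⟩⟩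
  rintro _ ⟨_, rfl, g, hg, rfl⟩
  exact h g hg

theorem mem_lda {S T U : B} {w : (freeQuantaloid B).Hom S U} {u : (freeQuantaloid B).Hom S T}
    {f : T ⟶ U} : f ∈ (freeQuantaloid B).lda w u ↔ ∀ g ∈ u, g ≫ f ∈ w := by
  refine ⟨fun ⟨s, hs, hf⟩ g hg => hs ⟨g, hg, f, hf, rfl⟩, fun h => ⟨{f}, ?_, rfl⟩⟩
  rintro _ ⟨g, hg, _, rfl, rfl⟩
  exact h g hg

theorem comp_mem_cast_right {S T U U' : B} (e : U = U') (s : Set (S ⟶ U)) (f : S ⟶ T)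
    (g : T ⟶ U') : f ≫ g ∈ (freeQuantaloid B).cast rfl e s ↔ f ≫ hcast rfl e.symm g ∈ s := by
  subst e; rfl

theorem comp_mem_cast_left {S S' T U : B} (e : S = S') (s : Set (S ⟶ U)) (g : S' ⟶ T)
    (f : T ⟶ U) : g ≫ f ∈ (freeQuantaloid B).cast e rfl s ↔ hcast e.symm rfl g ≫ f ∈ s := by
  subst e; rfl

end freeQuantaloid

namespace ConcCat

variable (D : ConcCat B) {T : B}

def sourceOfLegs (S : Set (Σ W : D.Obj, T ⟶ D.ext W)) : Source D.bar T :=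
  fun _ W => {u : T ⟶ D.ext W | ⟨W, u⟩ ∈ S}

def sinkOfLegs (S : Set (Σ W : D.Obj, D.ext W ⟶ T)) : Sink D.bar T :=
  fun W _ => {u : D.ext W ⟶ T | ⟨W, u⟩ ∈ S}

-- The `show` exposes the `Set` underlying a hom-lattice of the free quantaloid, which
-- membership needs in order to elaborate.
theorem exists_sourceOfLegs_eq (τ : Source D.bar T) : ∃ S, D.sourceOfLegs S = τ :=
  ⟨{p | p.2 ∈ (show Set (T ⟶ D.ext p.1) from τ PUnit.unit p.1)}, rfl⟩

theorem exists_sinkOfLegs_eq (σ : Sink D.bar T) : ∃ S, D.sinkOfLegs S = σ :=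
  ⟨{p | p.2 ∈ (show Set (D.ext p.1 ⟶ T) from σ p.1 PUnit.unit)}, rfl⟩

end ConcCat

namespace ConcFun

variable {D E : ConcCat B} (F : ConcFun D E) {T : B}

theorem rda_cograph_sourceOfLegs (S : Set (Σ W : D.Obj, T ⟶ D.ext W)) (Z : E.Obj) :
    QRel.rda (D.sourceOfLegs S) F.bar.cograph Z PUnit.unit =
      {f : E.ext Z ⟶ T | ∀ p ∈ S, f ≫ hcast rfl (F.ext p.1).symm p.2 ∈ E.hom Z (F.obj p.1)} := by
  refine Set.ext fun f => Set.mem_iInter.trans ?_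
  refine (forall_congr' fun W => freeQuantaloid.mem_rda.trans ?_).trans Sigma.forall.symm
  exact forall_congr' fun u => imp_congr_right fun _ =>
    freeQuantaloid.comp_mem_cast_right (F.ext W) _ f u

theorem lda_graph_sinkOfLegs (S : Set (Σ W : D.Obj, D.ext W ⟶ T)) (Z : E.Obj) :
    QRel.lda F.bar.graph (D.sinkOfLegs S) PUnit.unit Z =
      {g : T ⟶ E.ext Z | ∀ p ∈ S, hcast (F.ext p.1).symm rfl p.2 ≫ g ∈ E.hom (F.obj p.1) Z} := by
  refine Set.ext fun g => Set.mem_iInter.trans ?_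
  refine (forall_congr' fun W => freeQuantaloid.mem_lda.trans ?_).trans Sigma.forall.symm
  exact forall_congr' fun u => imp_congr_right fun _ =>
    freeQuantaloid.comp_mem_cast_left (F.ext W) _ u g

theorem codense_iff_exists_legs :
    F.bar.Codense ↔ ∀ Y : E.Obj, ∃ S : Set (Σ W : D.Obj, E.ext Y ⟶ D.ext W),
      ∀ (Z : E.Obj) (f : E.ext Z ⟶ E.ext Y),
        f ∈ E.hom Z Y ↔ ∀ p ∈ S, f ≫ hcast rfl (F.ext p.1).symm p.2 ∈ E.hom Z (F.obj p.1) := by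
  refine forall_congr' fun Y => ⟨?_, fun ⟨S, hS⟩ => ?_⟩
  · rintro ⟨T, τ, ⟨rfl, hτ⟩⟩
    obtain ⟨S, rfl⟩ := D.exists_sourceOfLegs_eq τ
    exact ⟨S, fun Z => Set.ext_iff.mp ((hτ Z).trans (F.rda_cograph_sourceOfLegs S Z))⟩
  · exact ⟨E.ext Y, D.sourceOfLegs S, rfl,
      fun Z => (Set.ext (hS Z)).trans (F.rda_cograph_sourceOfLegs S Z).symm⟩

theorem dense_iff_exists_legs :
    F.bar.Dense ↔ ∀ Y : E.Obj, ∃ S : Set (Σ W : D.Obj, D.ext W ⟶ E.ext Y),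
      ∀ (Z : E.Obj) (g : E.ext Y ⟶ E.ext Z),
        g ∈ E.hom Y Z ↔ ∀ p ∈ S, hcast (F.ext p.1).symm rfl p.2 ≫ g ∈ E.hom (F.obj p.1) Z := by
  refine forall_congr' fun Y => ⟨?_, fun ⟨S, hS⟩ => ?_⟩
  · rintro ⟨T, σ, ⟨rfl, hσ⟩⟩
    obtain ⟨S, rfl⟩ := D.exists_sinkOfLegs_eq σ
    exact ⟨S, fun Z => Set.ext_iff.mp ((hσ Z).trans (F.lda_graph_sinkOfLegs S Z))⟩
  · exact ⟨E.ext Y, D.sinkOfLegs S, rfl,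
      fun Z => (Set.ext (hS Z)).trans (F.lda_graph_sinkOfLegs S Z).symm⟩

end ConcFun

/-- Proposition 4.9: a concrete functor `F : D → E` over `B` is
initially dense (resp. finally dense) if and only if the corresponding `QB`-functor
`F̄ : D̄ → Ē` is codense (resp. dense). -/
theorem initiallyDense_iff_codense {B : Type u} [CategoryTheory.Category.{u} B]
    {D E : ConcCat B} (F : ConcFun D E) :
    (InitiallyDense F ↔ QFun.Codense F.bar) ∧ (FinallyDense F ↔ QFun.Dense F.bar) :=
  ⟨F.initiallyDense_iff_exists_legs.trans F.codense_iff_exists_legs.symm,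
    F.finallyDense_iff_exists_legs.trans F.dense_iff_exists_legs.symm⟩
end
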